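/- arXiv:2205.15840 — 2 statements merged into one kernel-verified Lean document; each statement's English description precedes it below -/
import Mathlib

section
/- For all graphs G1, G2 and every positive integer k, α_k(G1 □ G2) ≥ α_k(G1) · α_k(G2). -/
/-!
Distances in `G₁ □ G₂` are sums of the coordinate distances, so two distinct pairs are at least
as far apart as their entries in a coordinate where they differ. Hence the product of a maximum
`k`-independent set of `G₁` with one of `G₂` is `k`-independent in `G₁ □ G₂`.
-/

open SimpleGraph

/-- The `k`-independence number: the maximum size of a set of vertices at pairwise
distance greater than `k`. -/
noncomputable def kIndepNum {V : Type*} [Fintype V] (G : SimpleGraph V) (k : ℕ) : ℕ :=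
  sSup {n | ∃ s : Finset V, s.card = n ∧ ∀ u ∈ s, ∀ v ∈ s, u ≠ v → (k : ℕ∞) < G.edist u v}

namespace SimpleGraph

def IsKIndepSet {V : Type*} (G : SimpleGraph V) (k : ℕ) (s : Finset V) : Prop :=
  ∀ u ∈ s, ∀ v ∈ s, u ≠ v → (k : ℕ∞) < G.edist u v

section Fintype

variable {V : Type*} [Fintype V] {G : SimpleGraph V} {k : ℕ}

lemma bddAbove_card_isKIndepSet (G : SimpleGraph V) (k : ℕ) :
    BddAbove {n | ∃ s : Finset V, s.card = n ∧ G.IsKIndepSet k s} :=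
  ⟨Fintype.card V, by rintro n ⟨s, rfl, -⟩; exact s.card_le_univ⟩

lemma IsKIndepSet.card_le_kIndepNum {s : Finset V} (hs : G.IsKIndepSet k s) :
    s.card ≤ kIndepNum G k :=
  le_csSup (bddAbove_card_isKIndepSet G k) ⟨s, rfl, hs⟩

lemma exists_isKIndepSet_card_eq_kIndepNum (G : SimpleGraph V) (k : ℕ) :
    ∃ s : Finset V, s.card = kIndepNum G k ∧ G.IsKIndepSet k s :=
  Nat.sSup_mem (by exact ⟨0, ∅, rfl, by simp [IsKIndepSet]⟩) (bddAbove_card_isKIndepSet G k)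

end Fintype

lemma IsKIndepSet.product {V₁ V₂ : Type*} {G₁ : SimpleGraph V₁} {G₂ : SimpleGraph V₂} {k : ℕ}
    {s₁ : Finset V₁} {s₂ : Finset V₂} (hs₁ : G₁.IsKIndepSet k s₁) (hs₂ : G₂.IsKIndepSet k s₂) :
    (G₁ □ G₂).IsKIndepSet k (s₁ ×ˢ s₂) := by
  rintro ⟨u₁, u₂⟩ hu ⟨v₁, v₂⟩ hv hne
  rw [Finset.mem_product] at hu hv
  rw [edist_boxProd]
  by_cases h₁ : u₁ = v₁
  · have h₂ : u₂ ≠ v₂ := fun h₂ => hne (by rw [h₁, h₂])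
    exact (hs₂ u₂ hu.2 v₂ hv.2 h₂).trans_le le_add_self
  · exact (hs₁ u₁ hu.1 v₁ hv.1 h₁).trans_le le_self_add

end SimpleGraph

theorem kIndepNum_boxProd_ge_general {V1 V2 : Type*} [Fintype V1] [Fintype V2]
    (G1 : SimpleGraph V1) (G2 : SimpleGraph V2) (k : ℕ) :
    kIndepNum (G1 □ G2) k ≥ kIndepNum G1 k * kIndepNum G2 k := by
  obtain ⟨s1, hs1_card, hs1⟩ := exists_isKIndepSet_card_eq_kIndepNum G1 k
  obtain ⟨s2, hs2_card, hs2⟩ := exists_isKIndepSet_card_eq_kIndepNum G2 k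
  calc kIndepNum G1 k * kIndepNum G2 k = (s1 ×ˢ s2).card := by
        rw [Finset.card_product, hs1_card, hs2_card]
    _ ≤ kIndepNum (G1 □ G2) k := (hs1.product hs2).card_le_kIndepNum

theorem kIndepNum_boxProd_ge {V1 V2 : Type*} [Fintype V1] [Fintype V2]
    (G1 : SimpleGraph V1) (G2 : SimpleGraph V2) (k : ℕ) (hk : 0 < k) :
    kIndepNum (G1 □ G2) k ≥ kIndepNum G1 k * kIndepNum G2 k :=
  kIndepNum_boxProd_ge_general G1 G2 k
end

section
/- For every even positive integer k, if G1 and G2 are both paths on k+2 vertices, then α_k(G1 □ G2) = 4 = α_k(G1) · α_k(G2). -/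
open SimpleGraph

/-- Generic lower bound on walk length via a 1-Lipschitz potential. -/
lemma walk_len_ge {V : Type*} {G : SimpleGraph V} (f : V → ℕ)
    (hf : ∀ a b, G.Adj a b → Nat.dist (f a) (f b) ≤ 1) {u v : V} (p : G.Walk u v) :
    Nat.dist (f u) (f v) ≤ p.length := by
  induction p with
  | nil => simp
  | @cons a b c h q ih =>
    have h1 := hf _ _ h
    have h2 := Nat.dist.triangle_inequality (f a) (f b) (f c)
    simp only [SimpleGraph.Walk.length_cons]
    omega

lemma le_edist_of_lipschitz {V : Type*} {G : SimpleGraph V} (f : V → ℕ)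
    (hf : ∀ a b, G.Adj a b → Nat.dist (f a) (f b) ≤ 1) (u v : V) :
    (Nat.dist (f u) (f v) : ℕ∞) ≤ G.edist u v := by
  rw [SimpleGraph.edist_eq_sInf]
  apply le_sInf
  rintro _ ⟨p, rfl⟩
  show ((Nat.dist (f u) (f v) : ℕ)  : ℕ∞) ≤ (p.length : ℕ∞)
  exact_mod_cast walk_len_ge f hf p

lemma path_adj_dist {n : ℕ} {i j : Fin n} (h : (pathGraph n).Adj i j) :
    Nat.dist i.val j.val = 1 := by
  rw [pathGraph_adj] at h
  simp only [Nat.dist]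
  omega

lemma path_edist_le_aux (n : ℕ) :
    ∀ (d : ℕ) (i j : Fin n), i.val + d = j.val → (pathGraph n).edist i j ≤ d := by
  intro d
  induction d with
  | zero =>
    intro i j h
    have : i = j := Fin.ext (by omega)
    simp [this]
  | succ d ih =>
    intro i j h
    have hi' : i.val + 1 < n := by have := j.isLt; omega
    set i' : Fin n := ⟨i.val + 1, hi'⟩ with hi'def
    have hadj : (pathGraph n).Adj i i' := by rw [pathGraph_adj]; left; rfl
    have h1 : (pathGraph n).edist i i' ≤ 1 := by
      have := SimpleGraph.edist_le (SimpleGraph.Walk.cons hadj SimpleGraph.Walk.nil)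
      simpa using this
    have h2 : (pathGraph n).edist i' j ≤ d := ih i' j (by simp [hi'def]; omega)
    calc (pathGraph n).edist i j ≤ _ + _ := SimpleGraph.edist_triangle (v := i')
    _ ≤ 1 + (d : ℕ∞) := add_le_add h1 h2
    _ = ((d + 1 : ℕ) : ℕ∞) := by push_cast; ring

lemma path_edist_le (n : ℕ) (i j : Fin n) :
    (pathGraph n).edist i j ≤ (Nat.dist i.val j.val : ℕ∞) := by
  rcases le_total i.val j.val with h | h
  · rw [Nat.dist_eq_sub_of_le h]
    exact path_edist_le_aux n _ i j (by omega)
  · rw [Nat.dist_eq_sub_of_le_right h, SimpleGraph.edist_comm]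
    exact path_edist_le_aux n _ j i (by omega)

lemma box_edist_le {α β : Type*} (G : SimpleGraph α) (H : SimpleGraph β)
    (a c : α) (b d : β) :
    (G □ H).edist (a, b) (c, d) ≤ G.edist a c + H.edist b d := by
  rcases eq_or_ne (G.edist a c) ⊤ with h1 | h1
  · simp [h1]
  rcases eq_or_ne (H.edist b d) ⊤ with h2 | h2
  · simp [h2]
  obtain ⟨p, hp⟩ := SimpleGraph.exists_walk_of_edist_ne_top h1
  obtain ⟨q, hq⟩ := SimpleGraph.exists_walk_of_edist_ne_top h2
  have := SimpleGraph.edist_le ((p.boxProdLeft H b).append (q.boxProdRight G c))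
  rw [SimpleGraph.Walk.length_append] at this
  have hl1 : (p.boxProdLeft H b).length = p.length := SimpleGraph.Walk.length_map _ _
  have hl2 : (q.boxProdRight G c).length = q.length := SimpleGraph.Walk.length_map _ _
  rw [hl1, hl2] at this
  calc (G □ H).edist (a, b) (c, d) ≤ ((p.length + q.length : ℕ) : ℕ∞) := this
  _ = (p.length : ℕ∞) + q.length := by push_cast; ring
  _ = G.edist a c + H.edist b d := by rw [hp, hq]

/-- Lower bound on box-product distance in terms of L1 distance of `Fin.val`s. -/
lemma box_path_edist_ge (n : ℕ) (u v : Fin n × Fin n) :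
    ((Nat.dist u.1.val v.1.val + Nat.dist u.2.val v.2.val : ℕ) : ℕ∞) ≤
      (pathGraph n □ pathGraph n).edist u v := by
  have hf : ∀ a b : Fin n × Fin n, (pathGraph n □ pathGraph n).Adj a b →
      Nat.dist (Nat.dist a.1.val v.1.val + Nat.dist a.2.val v.2.val)
        (Nat.dist b.1.val v.1.val + Nat.dist b.2.val v.2.val) ≤ 1 := by
    intro a b hab
    rw [SimpleGraph.boxProd_adj] at hab
    rcases hab with ⟨h, he⟩ | ⟨h, he⟩
    · have := path_adj_dist h
      have he' : a.2.val = b.2.val := by rw [he]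
      simp only [Nat.dist] at *
      omega
    · have := path_adj_dist h
      have he' : a.1.val = b.1.val := by rw [he]
      simp only [Nat.dist] at *
      omega
  have := le_edist_of_lipschitz _ hf u v
  simpa [Nat.dist_self, Nat.dist_zero_right, Nat.cast_add] using this

lemma path_edist_ge (n : ℕ) (u v : Fin n) :
    ((Nat.dist u.val v.val : ℕ) : ℕ∞) ≤ (pathGraph n).edist u v := by
  exact le_edist_of_lipschitz Fin.val (fun a b h => le_of_eq (path_adj_dist h)) u v

theorem kIndepNum_boxProd_path (k : ℕ) (hk : 0 < k) (hke : Even k) :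
    kIndepNum (pathGraph (k + 2) □ pathGraph (k + 2)) k = 4 ∧
      4 = kIndepNum (pathGraph (k + 2)) k * kIndepNum (pathGraph (k + 2)) k := by
  obtain ⟨m, rfl⟩ := hke
  set k := m + m with hkdef
  have hm : 0 < m := by omega
  set z : Fin (k + 2) := ⟨0, by omega⟩ with hz
  set l : Fin (k + 2) := ⟨k + 1, by omega⟩ with hl
  -- k-independence number of the path is 2
  have hpath : kIndepNum (pathGraph (k + 2)) k = 2 := by
    apply le_antisymm
    · refine csSup_le ⟨0, ∅, by simp⟩ ?_
      rintro n ⟨s, rfl, hs⟩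
      by_contra hcard
      push_neg at hcard
      obtain ⟨u, hu, v, hv, w, hw, huv, huw, hvw⟩ := Finset.two_lt_card.mp hcard
      have key : ∀ a ∈ s, ∀ b ∈ s, a ≠ b → Nat.dist a.val b.val = k + 1 := by
        intro a ha b hb hab
        have h1 := lt_of_lt_of_le (hs a ha b hb hab) (path_edist_le (k + 2) a b)
        have h2 : k < Nat.dist a.val b.val := by exact_mod_cast h1
        have h3 := a.isLt
        have h4 := b.isLt
        simp only [Nat.dist] at *
        omega
      have h1 := key u hu v hv huv
      have h2 := key u hu w hw huw
      have h3 := key v hv w hw hvw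
      have huv' : u.val ≠ v.val := fun h => huv (Fin.ext h)
      have huw' : u.val ≠ w.val := fun h => huw (Fin.ext h)
      have hvw' : v.val ≠ w.val := fun h => hvw (Fin.ext h)
      simp only [Nat.dist] at *
      omega
    · apply le_csSup
      · refine ⟨4, ?_⟩
        rintro n ⟨s, rfl, hs⟩
        by_contra hcard
        push_neg at hcard
        obtain ⟨u, hu, v, hv, w, hw, huv, huw, hvw⟩ :=
          Finset.two_lt_card.mp (by omega : 2 < s.card)
        have key : ∀ a ∈ s, ∀ b ∈ s, a ≠ b → Nat.dist a.val b.val = k + 1 := by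
          intro a ha b hb hab
          have h1 := lt_of_lt_of_le (hs a ha b hb hab) (path_edist_le (k + 2) a b)
          have h2 : k < Nat.dist a.val b.val := by exact_mod_cast h1
          have h3 := a.isLt
          have h4 := b.isLt
          simp only [Nat.dist] at *
          omega
        have h1 := key u hu v hv huv
        have h2 := key u hu w hw huw
        have h3 := key v hv w hw hvw
        have huv' : u.val ≠ v.val := fun h => huv (Fin.ext h)
        have huw' : u.val ≠ w.val := fun h => huw (Fin.ext h)
        have hvw' : v.val ≠ w.val := fun h => hvw (Fin.ext h)
        simp only [Nat.dist] at *
        omega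
      · refine ⟨{z, l}, ?_, ?_⟩
        · rw [Finset.card_insert_of_notMem (by simp [hz, hl, Fin.ext_iff])]
          simp
        · intro u hu v hv huv
          have hvals : ∀ w : Fin (k+2), w ∈ ({z, l} : Finset _) → w.val = 0 ∨ w.val = k + 1 := by
            intro w hw
            simp only [Finset.mem_insert, Finset.mem_singleton] at hw
            rcases hw with rfl | rfl <;> simp [hz, hl]
          have h1 := hvals u hu
          have h2 := hvals v hv
          have hle := path_edist_ge (k + 2) u v
          apply lt_of_lt_of_le _ hle
          have huv' : u.val ≠ v.val := fun h => huv (Fin.ext h)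
          have : k < Nat.dist u.val v.val := by simp only [Nat.dist]; omega
          exact_mod_cast this
  refine ⟨?_, by rw [hpath]⟩
  -- box product
  apply le_antisymm
  · refine csSup_le ⟨0, ∅, by simp⟩ ?_
    rintro n ⟨s, rfl, hs⟩
    by_contra hcard
    push_neg at hcard
    have hcard' : (Finset.univ : Finset (Bool × Bool)).card < s.card := by
      simp only [Finset.card_univ]
      simp only [Fintype.card_prod, Fintype.card_bool]
      omega
    obtain ⟨u, hu, v, hv, huv, hq⟩ :=
      Finset.exists_ne_map_eq_of_card_lt_of_maps_to hcard'
        (f := fun p => (decide (p.1.val ≤ m), decide (p.2.val ≤ m)))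
        (fun a _ => Finset.mem_univ _)
    have hq1 : (u.1.val ≤ m) = (v.1.val ≤ m) := by
      have := congrArg Prod.fst hq
      simpa using this
    have hq2 : (u.2.val ≤ m) = (v.2.val ≤ m) := by
      have := congrArg Prod.snd hq
      simpa using this
    have hd1 : Nat.dist u.1.val v.1.val ≤ m := by
      have h1 := u.1.isLt
      have h2 := v.1.isLt
      by_cases hc : u.1.val ≤ m
      · have : v.1.val ≤ m := by rw [← hq1]; exact hc
        simp only [Nat.dist]; omega
      · have : ¬ v.1.val ≤ m := by rw [← hq1]; exact hc
        simp only [Nat.dist] at *; omega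
    have hd2 : Nat.dist u.2.val v.2.val ≤ m := by
      have h1 := u.2.isLt
      have h2 := v.2.isLt
      by_cases hc : u.2.val ≤ m
      · have : v.2.val ≤ m := by rw [← hq2]; exact hc
        simp only [Nat.dist]; omega
      · have : ¬ v.2.val ≤ m := by rw [← hq2]; exact hc
        simp only [Nat.dist] at *; omega
    have hbig := hs u hu v hv huv
    have hle : (pathGraph (k + 2) □ pathGraph (k + 2)).edist u v ≤ (k : ℕ∞) := by
      calc (pathGraph (k + 2) □ pathGraph (k + 2)).edist u v
          = (pathGraph (k + 2) □ pathGraph (k + 2)).edist (u.1, u.2) (v.1, v.2) := by simp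
        _ ≤ (pathGraph (k + 2)).edist u.1 v.1 + (pathGraph (k + 2)).edist u.2 v.2 :=
            box_edist_le _ _ _ _ _ _
        _ ≤ ((Nat.dist u.1.val v.1.val : ℕ) : ℕ∞) + ((Nat.dist u.2.val v.2.val : ℕ) : ℕ∞) :=
            add_le_add (path_edist_le _ _ _) (path_edist_le _ _ _)
        _ = ((Nat.dist u.1.val v.1.val + Nat.dist u.2.val v.2.val : ℕ) : ℕ∞) := by
            push_cast; ring
        _ ≤ (k : ℕ∞) := by exact_mod_cast (by omega : Nat.dist u.1.val v.1.val + Nat.dist u.2.val v.2.val ≤ k)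
    exact absurd (lt_of_lt_of_le hbig hle) (lt_irrefl _)
  · apply le_csSup
    · refine ⟨9, ?_⟩
      rintro n ⟨s, rfl, hs⟩
      by_contra hcard
      push_neg at hcard
      have hcard' : (Finset.univ : Finset (Bool × Bool)).card < s.card := by
        simp only [Finset.card_univ, Fintype.card_prod, Fintype.card_bool]
        omega
      obtain ⟨u, hu, v, hv, huv, hq⟩ :=
        Finset.exists_ne_map_eq_of_card_lt_of_maps_to hcard'
          (f := fun p => (decide (p.1.val ≤ m), decide (p.2.val ≤ m)))
          (fun a _ => Finset.mem_univ _)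
      have hq1 : (u.1.val ≤ m) = (v.1.val ≤ m) := by
        have := congrArg Prod.fst hq
        simpa using this
      have hq2 : (u.2.val ≤ m) = (v.2.val ≤ m) := by
        have := congrArg Prod.snd hq
        simpa using this
      have hd1 : Nat.dist u.1.val v.1.val ≤ m := by
        have h1 := u.1.isLt
        have h2 := v.1.isLt
        by_cases hc : u.1.val ≤ m
        · have : v.1.val ≤ m := by rw [← hq1]; exact hc
          simp only [Nat.dist]; omega
        · have : ¬ v.1.val ≤ m := by rw [← hq1]; exact hc
          simp only [Nat.dist] at *; omega
      have hd2 : Nat.dist u.2.val v.2.val ≤ m := by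
        have h1 := u.2.isLt
        have h2 := v.2.isLt
        by_cases hc : u.2.val ≤ m
        · have : v.2.val ≤ m := by rw [← hq2]; exact hc
          simp only [Nat.dist]; omega
        · have : ¬ v.2.val ≤ m := by rw [← hq2]; exact hc
          simp only [Nat.dist] at *; omega
      have hbig := hs u hu v hv huv
      have hle : (pathGraph (k + 2) □ pathGraph (k + 2)).edist u v ≤ (k : ℕ∞) := by
        calc (pathGraph (k + 2) □ pathGraph (k + 2)).edist u v
            = (pathGraph (k + 2) □ pathGraph (k + 2)).edist (u.1, u.2) (v.1, v.2) := by simp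
          _ ≤ (pathGraph (k + 2)).edist u.1 v.1 + (pathGraph (k + 2)).edist u.2 v.2 :=
              box_edist_le _ _ _ _ _ _
          _ ≤ ((Nat.dist u.1.val v.1.val : ℕ) : ℕ∞) + ((Nat.dist u.2.val v.2.val : ℕ) : ℕ∞) :=
              add_le_add (path_edist_le _ _ _) (path_edist_le _ _ _)
          _ = ((Nat.dist u.1.val v.1.val + Nat.dist u.2.val v.2.val : ℕ) : ℕ∞) := by
              push_cast; ring
          _ ≤ (k : ℕ∞) := by exact_mod_cast (by omega : Nat.dist u.1.val v.1.val + Nat.dist u.2.val v.2.val ≤ k)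
      exact absurd (lt_of_lt_of_le hbig hle) (lt_irrefl _)
    · refine ⟨{(z, z), (z, l), (l, z), (l, l)}, ?_, ?_⟩
      · have hzl : z ≠ l := by simp [hz, hl, Fin.ext_iff]
        rw [Finset.card_insert_of_notMem (by simp [Prod.ext_iff, hzl, hzl.symm]),
          Finset.card_insert_of_notMem (by simp [Prod.ext_iff, hzl, hzl.symm]),
          Finset.card_insert_of_notMem (by simp [Prod.ext_iff, hzl, hzl.symm])]
        simp
      · intro u hu v hv huv
        have hvals : ∀ w : Fin (k+2) × Fin (k+2),
            w ∈ ({(z, z), (z, l), (l, z), (l, l)} : Finset _) →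
            (w.1.val = 0 ∨ w.1.val = k + 1) ∧ (w.2.val = 0 ∨ w.2.val = k + 1) := by
          intro w hw
          simp only [Finset.mem_insert, Finset.mem_singleton] at hw
          rcases hw with rfl | rfl | rfl | rfl <;> simp [hz, hl]
        have h1 := hvals u hu
        have h2 := hvals v hv
        have hle := box_path_edist_ge (k + 2) u v
        apply lt_of_lt_of_le _ hle
        have hdist : u.1.val ≠ v.1.val ∨ u.2.val ≠ v.2.val := by
          by_contra hcon
          push_neg at hcon
          exact huv (Prod.ext (Fin.ext hcon.1) (Fin.ext hcon.2))
        have : k < Nat.dist u.1.val v.1.val + Nat.dist u.2.val v.2.val := by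
          simp only [Nat.dist] at *
          omega
        exact_mod_cast this
end
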